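/- If configuration C' is obtained from configuration C by a Swap, Pay, Redeem, or Advance-date transaction, then the total multiset of bonds held by all agents (the sum over agents q of the multisets C(q).holdings) is equal in C and C'; in particular, for every agent p the number of p-bonds in circulation is the same in C and C'. -/
import Mathlib


/-! Grassroots bonds framework.

Agents form a finite type `P` with decidable equality.  A bond is a pair
(issuer, maturity) in `P × ℕ`.  The machine state of an agent is a multiset
of bonds (its holdings) together with a local date. -/

structure AgentState (P : Type*) where
  holdings : Multiset (P × ℕ)
  date : ℕ

/-- A configuration assigns a machine state to every agent. -/
abbrev Config (P : Type*) := P → AgentState P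

/-- Labels of the grassroots bonds transactions. -/
inductive Tx (P : Type*) where
  | mint (p : P) (k d : ℕ)
  | advance (p : P) (d' : ℕ)
  | swap (p q : P) (x y : Multiset (P × ℕ))
  | pay (p q : P) (x : Multiset (P × ℕ))
  | redeem (p q : P) (x y : P × ℕ)

/-- The grassroots bonds transactions, relating a configuration `C` to a
configuration `C'` that agrees with `C` on every agent not mentioned. -/
inductive TxStep {P : Type*} [DecidableEq P] : Tx P → Config P → Config P → Prop
  | mint {C : Config P} {p : P} {k d : ℕ} (hk : 0 < k) :
      TxStep (Tx.mint p k d) C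
        (Function.update C p
          ⟨(C p).holdings + Multiset.replicate k (p, d), (C p).date⟩)
  | advance {C : Config P} {p : P} {d' : ℕ} (h : (C p).date < d') :
      TxStep (Tx.advance p d') C (Function.update C p ⟨(C p).holdings, d'⟩)
  | swap {C : Config P} {p q : P} {x y : Multiset (P × ℕ)} (hpq : p ≠ q)
      (hx : x ≤ (C p).holdings) (hy : y ≤ (C q).holdings) :
      TxStep (Tx.swap p q x y) C
        (Function.update
          (Function.update C p ⟨(C p).holdings - x + y, (C p).date⟩) q
          ⟨(C q).holdings - y + x, (C q).date⟩)
  | pay {C : Config P} {p q : P} {x : Multiset (P × ℕ)} (hpq : p ≠ q)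
      (hx : x ≤ (C p).holdings)
      (hcoins : ∀ b ∈ x, b.1 = q ∧ b.2 ≤ (C p).date) :
      TxStep (Tx.pay p q x) C
        (Function.update
          (Function.update C p ⟨(C p).holdings - x, (C p).date⟩) q
          ⟨(C q).holdings + x, (C q).date⟩)
  | redeem {C : Config P} {p q : P} {x y : P × ℕ} (hpq : p ≠ q) (hxq : x.1 = q)
      (hxd : x.2 ≤ (C p).date) (hx : x ∈ (C p).holdings) (hy : y ∈ (C q).holdings) :
      TxStep (Tx.redeem p q x y) C
        (Function.update
          (Function.update C p ⟨(C p).holdings - {x} + {y}, (C p).date⟩) q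
          ⟨(C q).holdings - {y} + {x}, (C q).date⟩)

/-- The initial configuration: every agent with empty holdings and date 0. -/
def initConfig {P : Type*} : Config P := fun _ => ⟨0, 0⟩

/-- The number of `p`-bonds in circulation in `C`. -/
def circulation {P : Type*} [DecidableEq P] [Fintype P] (C : Config P) (p : P) : ℕ :=
  ∑ q : P, ((C q).holdings.filter (fun b => b.1 = p)).card

lemma sum_update_two {M : Type*} [AddCommMonoid M] {P : Type*} [Fintype P] [DecidableEq P]
    (f : P → M) {p q : P} (hpq : p ≠ q) (a b : M) (hab : a + b = f p + f q) :
    ∑ i, Function.update (Function.update f p a) q b i = ∑ i, f i := by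
  rw [Finset.sum_update_of_mem (Finset.mem_univ q),
    Finset.sum_update_of_mem (by simp [hpq] : p ∈ Finset.univ \ {q}),
    Finset.sum_eq_add_sum_sdiff_singleton_of_mem (Finset.mem_univ q) f,
    Finset.sum_eq_add_sum_sdiff_singleton_of_mem (by simp [hpq] : p ∈ Finset.univ \ {q}) f,
    ← add_assoc, ← add_assoc, add_comm b a, hab, add_comm (f p) (f q)]

lemma circulation_eq {P : Type*} [DecidableEq P] [Fintype P] (C : Config P) (p : P) :
    circulation C p = Multiset.card ((∑ q : P, (C q).holdings).filter (fun b => b.1 = p)) := by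
  let f : Multiset (P × ℕ) →+ ℕ :=
    { toFun := fun s => (s.filter (fun b => b.1 = p)).card
      map_zero' := by simp
      map_add' := fun s t => by simp [Multiset.filter_add] }
  exact (map_sum f (fun q => (C q).holdings) Finset.univ).symm


lemma sum_holdings_update_two {P : Type*} [Fintype P] [DecidableEq P] (C : Config P)
    {p q : P} (hpq : p ≠ q) (A B : AgentState P)
    (hab : A.holdings + B.holdings = (C p).holdings + (C q).holdings) :
    ∑ i, ((Function.update (Function.update C p A) q B) i).holdings
      = ∑ i, (C i).holdings := by
  have key : ∀ i, ((Function.update (Function.update C p A) q B) i).holdings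
      = Function.update (Function.update (fun i => (C i).holdings) p A.holdings)
          q B.holdings i := by
    intro i
    rcases eq_or_ne i q with rfl | hiq
    · simp
    · rcases eq_or_ne i p with rfl | hip
      · simp [Function.update_of_ne hiq]
      · simp [Function.update_of_ne hiq, Function.update_of_ne hip]
  simp only [key]
  exact sum_update_two _ hpq _ _ hab

/-- If `C'` is obtained from `C` by a Swap, Pay, Redeem, or Advance-date
transaction (i.e., any transaction that is not a Mint), then the total
multiset of bonds held by all agents is equal in `C` and `C'`; in particular,
for every agent `p` the number of `p`-bonds in circulation is unchanged. -/
theorem non_mint_conserves_bonds {P : Type*} [DecidableEq P] [Fintype P]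
    {tx : Tx P} {C C' : Config P}
    (h : TxStep tx C C') (hnm : ∀ p k d, tx ≠ Tx.mint p k d) :
    (∑ q : P, (C' q).holdings) = (∑ q : P, (C q).holdings) ∧
    ∀ p : P, circulation C' p = circulation C p := by
  have hsum : (∑ q : P, (C' q).holdings) = (∑ q : P, (C q).holdings) := by
    cases h with
    | mint hk => exact absurd rfl (hnm _ _ _)
    | @advance _ p _ h =>
        apply Finset.sum_congr rfl
        intro i _
        rcases eq_or_ne i p with rfl | hi
        · simp
        · simp [Function.update_of_ne hi]
    | @swap _ p q x y hpq hx hy =>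
        refine sum_holdings_update_two C hpq _ _ ?_
        show (C p).holdings - x + y + ((C q).holdings - y + x) = _
        rw [add_add_add_comm, add_comm y x, ← add_add_add_comm,
          tsub_add_cancel_of_le hx, tsub_add_cancel_of_le hy]
    | @pay _ p q x hpq hx hcoins =>
        refine sum_holdings_update_two C hpq _ _ ?_
        show (C p).holdings - x + ((C q).holdings + x) = _
        rw [add_comm (C q).holdings x, ← add_assoc, tsub_add_cancel_of_le hx]
    | @redeem _ p q x y hpq hxq hxd hx hy =>
        refine sum_holdings_update_two C hpq _ _ ?_
        show (C p).holdings - {x} + {y} + ((C q).holdings - {y} + {x}) = _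
        rw [add_add_add_comm, add_comm ({y} : Multiset (P × ℕ)) {x}, ← add_add_add_comm,
          tsub_add_cancel_of_le (Multiset.singleton_le.2 hx),
          tsub_add_cancel_of_le (Multiset.singleton_le.2 hy)]
  refine ⟨hsum, fun p => ?_⟩
  rw [circulation_eq, circulation_eq, hsum]
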